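/- The set of solutions (p2, p3, p4, p5, p6, p15, p20, p30, p10, p12, p41, p43, p45, p119) ∈ ℚ^14 with all coordinates nonzero of the system p41 = p10^3·p12, p43 = p10^2·p12^2, p45 = p10·p12^3, p119 = p41·p43·p10^2·p12^3, p119 = p10^12, p119 = p12^10, p119 = p2^60, p119 = p3^40, p119 = p4^30, p119 = p5^20, p119 = p6^20, p119 = p15^8, p119 = p20^6, p119 = p30^4 forms, under componentwise multiplication, a group of order exactly 512 in which every element squares to the identity; hence it is isomorphic to (ℤ/2ℤ)^9. -/

import Mathlib

/-!
Eliminating p41 and p43, the relation for p119 reads p10^12 = p10^7 p12^6, i.e. p10^5 = p12^6;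
together with p10^12 = p12^10 this forces p10 = p12^10 and p12^22 = 1. The only roots of unity
in ℚ are ±1, so p10 = p119 = 1, p12 = ±1, p41 = p45 = p12, p43 = 1, and p2, …, p30 are arbitrary
signs. The solutions are therefore the image of an injective homomorphism from (ℤ/2ℤ)^9 that
places nine independent signs at p2, …, p30 and p12.
-/

section NegOnePow

variable {M : Type*} [Monoid M] [HasDistribNeg M]

def negOnePowHom : Multiplicative (ZMod 2) →* M where
  toFun a := (-1) ^ a.toAdd.val
  map_one' := pow_zero _
  map_mul' a b := by
    rw [← pow_add, toAdd_mul, ZMod.val_add]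
    conv_rhs => rw [← Nat.mod_add_div (_ + _) 2, pow_add, pow_mul]
    simp

theorem negOnePowHom_apply (a : Multiplicative (ZMod 2)) :
    negOnePowHom a = (-1 : M) ^ a.toAdd.val :=
  rfl

theorem negOnePowHom_pow_of_even (a : Multiplicative (ZMod 2)) {n : ℕ} (hn : Even n) :
    (negOnePowHom a : M) ^ n = 1 := by
  rw [negOnePowHom_apply, pow_right_comm, hn.neg_one_pow, one_pow]

theorem negOnePowHom_pow_of_odd (a : Multiplicative (ZMod 2)) {n : ℕ} (hn : Odd n) :
    (negOnePowHom a : M) ^ n = negOnePowHom a := by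
  rw [negOnePowHom_apply, pow_right_comm, hn.neg_one_pow]

theorem negOnePowHom_ofAdd_one : negOnePowHom (Multiplicative.ofAdd 1) = (-1 : M) :=
  pow_one _

theorem negOnePowHom_injective (h : (-1 : M) ≠ 1) :
    Function.Injective (negOnePowHom (M := M)) := by
  rw [injective_iff_map_eq_one]
  intro a ha
  induction a using Multiplicative.rec with | ofAdd a => ?_
  fin_cases a
  · rfl
  · exact (h (negOnePowHom_ofAdd_one.symm.trans ha)).elim

theorem exists_negOnePowHom_eq {u : M} (hu : u = 1 ∨ u = -1) : ∃ a, negOnePowHom a = u := by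
  rcases hu with rfl | rfl
  · exact ⟨1, map_one _⟩
  · exact ⟨_, negOnePowHom_ofAdd_one⟩

end NegOnePow

theorem Units.eq_one_or_eq_neg_one_of_pow_eq_one {R : Type*} [Ring R] [LinearOrder R]
    [IsStrictOrderedRing R] {u : Rˣ} {n : ℕ} (hn : n ≠ 0) (h : u ^ n = 1) :
    u = 1 ∨ u = -1 := by
  have hval : (u : R) ^ n = 1 := by rw [← Units.val_pow_eq_pow_val, h, Units.val_one]
  rcases (pow_eq_one_iff_of_ne_zero hn).mp hval with h1 | ⟨h1, -⟩
  · exact Or.inl (Units.ext h1)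
  · exact Or.inr (Units.ext h1)

theorem eq_pow_ten_and_pow_twentytwo_eq_one {G : Type*} [CommGroup G] {a b : G}
    (h₁ : a ^ 5 = b ^ 6) (h₂ : a ^ 12 = b ^ 10) : a = b ^ 10 ∧ b ^ 22 = 1 := by
  have ha : a = b ^ 10 :=
    calc a = (a ^ 5) ^ 5 * ((a ^ 12) ^ 2)⁻¹ := by group
      _ = b ^ 10 := by rw [h₁, h₂]; group
  refine ⟨ha, ?_⟩
  have h₁' : b ^ 50 = b ^ 6 := by rw [← h₁, ha, ← pow_mul]
  have h₂' : b ^ 120 = b ^ 10 := by rw [← h₂, ha, ← pow_mul]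
  calc b ^ 22 = b ^ 120 * (b ^ 10)⁻¹ * ((b ^ 50 * (b ^ 6)⁻¹) ^ 2)⁻¹ := by group
    _ = 1 := by rw [h₁', h₂']; group

def IsCoherent (p : Fin 14 → ℚˣ) : Prop :=
  p 10 = p 8 ^ 3 * p 9 ∧
  p 11 = p 8 ^ 2 * p 9 ^ 2 ∧
  p 12 = p 8 * p 9 ^ 3 ∧
  p 13 = p 10 * p 11 * p 8 ^ 2 * p 9 ^ 3 ∧
  p 13 = p 8 ^ 12 ∧
  p 13 = p 9 ^ 10 ∧
  p 13 = p 0 ^ 60 ∧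
  p 13 = p 1 ^ 40 ∧
  p 13 = p 2 ^ 30 ∧
  p 13 = p 3 ^ 20 ∧
  p 13 = p 4 ^ 20 ∧
  p 13 = p 5 ^ 8 ∧
  p 13 = p 6 ^ 6 ∧
  p 13 = p 7 ^ 4

open Multiplicative in
def signTuple : Multiplicative (Fin 9 → ZMod 2) →* (Fin 14 → ℚˣ) where
  toFun f :=
    let s : Fin 9 → ℚˣ := fun j => negOnePowHom (ofAdd (f.toAdd j))
    ![s 0, s 1, s 2, s 3, s 4, s 5, s 6, s 7, 1, s 8, s 8, 1, s 8, 1]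
  map_one' := by funext i; fin_cases i <;> simp
  map_mul' f g := by funext i; fin_cases i <;> simp

def signIndex : Fin 9 → Fin 14 := ![0, 1, 2, 3, 4, 5, 6, 7, 9]

theorem signTuple_apply_signIndex (f : Multiplicative (Fin 9 → ZMod 2)) (j : Fin 9) :
    signTuple f (signIndex j) = negOnePowHom (Multiplicative.ofAdd (f.toAdd j)) := by
  fin_cases j <;> rfl

theorem signTuple_injective : Function.Injective signTuple := by
  intro f g hfg
  apply Multiplicative.toAdd.injective
  funext j
  apply Multiplicative.ofAdd.injective
  apply negOnePowHom_injective (by decide : (-1 : ℚˣ) ≠ 1)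
  rw [← signTuple_apply_signIndex, ← signTuple_apply_signIndex, hfg]

theorem isCoherent_signTuple (f : Multiplicative (Fin 9 → ZMod 2)) :
    IsCoherent (signTuple f) := by
  simp (disch := decide) [IsCoherent, signTuple, ← sq, negOnePowHom_pow_of_even,
    negOnePowHom_pow_of_odd]

theorem IsCoherent.normal_form {p : Fin 14 → ℚˣ} (hp : IsCoherent p) :
    p 8 = 1 ∧ p 10 = p 9 ∧ p 11 = 1 ∧ p 12 = p 9 ∧ p 13 = 1 ∧
      ∀ j, p (signIndex j) = 1 ∨ p (signIndex j) = -1 := by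
  obtain ⟨h10, h11, h12, h13, h8, h9, h0, h1, h2, h3, h4, h5, h6, h7⟩ := hp
  have hrel : p 8 ^ 5 = p 9 ^ 6 := by
    apply mul_left_cancel (a := p 8 ^ 7)
    calc p 8 ^ 7 * p 8 ^ 5 = p 13 := by rw [h8, ← pow_add]
      _ = p 8 ^ 3 * p 9 * (p 8 ^ 2 * p 9 ^ 2) * p 8 ^ 2 * p 9 ^ 3 := by rw [h13, h10, h11]
      _ = p 8 ^ 7 * p 9 ^ 6 := by simp only [pow_succ, pow_zero, one_mul]; ac_rfl
  obtain ⟨hp8_eq, hp9_pow⟩ := eq_pow_ten_and_pow_twentytwo_eq_one hrel (h8.symm.trans h9)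
  have hp9 : p 9 = 1 ∨ p 9 = -1 := Units.eq_one_or_eq_neg_one_of_pow_eq_one (by norm_num) hp9_pow
  have hsq : p 9 ^ 2 = 1 := by rcases hp9 with h | h <;> simp [h]
  have hp8 : p 8 = 1 := by rw [hp8_eq, pow_mul (p 9) 2 5, hsq, one_pow]
  have hp13 : p 13 = 1 := by rw [h8, hp8, one_pow]
  refine ⟨hp8, ?_, ?_, ?_, hp13, ?_⟩
  · rw [h10, hp8, one_pow, one_mul]
  · rw [h11, hp8, one_pow, one_mul, hsq]
  · rw [h12, hp8, one_mul, pow_succ, hsq, one_mul]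
  intro j
  obtain ⟨n, hn, hpow⟩ : ∃ n ≠ 0, p (signIndex j) ^ n = 1 := by
    fin_cases j
    exacts [⟨60, by norm_num, h0.symm.trans hp13⟩, ⟨40, by norm_num, h1.symm.trans hp13⟩,
      ⟨30, by norm_num, h2.symm.trans hp13⟩, ⟨20, by norm_num, h3.symm.trans hp13⟩,
      ⟨20, by norm_num, h4.symm.trans hp13⟩, ⟨8, by norm_num, h5.symm.trans hp13⟩,
      ⟨6, by norm_num, h6.symm.trans hp13⟩, ⟨4, by norm_num, h7.symm.trans hp13⟩,
      ⟨10, by norm_num, h9.symm.trans hp13⟩]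
  exact Units.eq_one_or_eq_neg_one_of_pow_eq_one hn hpow

theorem IsCoherent.mem_range_signTuple {p : Fin 14 → ℚˣ} (hp : IsCoherent p) :
    p ∈ signTuple.range := by
  obtain ⟨hp8, hp10, hp11, hp12, hp13, hsign⟩ := hp.normal_form
  choose a ha using fun j => exists_negOnePowHom_eq (hsign j)
  refine ⟨Multiplicative.ofAdd fun j => (a j).toAdd, ?_⟩
  funext i
  fin_cases i <;> simp [signTuple, ha, signIndex, hp8, hp10, hp11, hp12, hp13]

theorem coe_range_signTuple : (signTuple.range : Set (Fin 14 → ℚˣ)) = {p | IsCoherent p} := by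
  ext p
  exact ⟨fun ⟨f, hf⟩ => hf ▸ isCoherent_signTuple f, IsCoherent.mem_range_signTuple⟩

/-- Remark 3.3, algebra (ΛU₇, δ₇): nonzero solutions (tuples `Fin 14 → ℚˣ`,
coordinates `p 0 = p2`, `p 1 = p3`, `p 2 = p4`, `p 3 = p5`, `p 4 = p6`, `p 5 = p15`, `p 6 = p20`, `p 7 = p30`, `p 8 = p10`, `p 9 = p12`, `p 10 = p41`, `p 11 = p43`, `p 12 = p45`, `p 13 = p119`)
form a group of order 512 under componentwise multiplication in which every
element squares to the identity; hence it is isomorphic to (ℤ/2ℤ)^9. -/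
theorem stmt_12 :
    ∃ H : Subgroup (Fin 14 → ℚˣ),
      (H : Set (Fin 14 → ℚˣ)) =
        {p : Fin 14 → ℚˣ | p 10 = p 8 ^ 3 * p 9 ∧
        p 11 = p 8 ^ 2 * p 9 ^ 2 ∧
        p 12 = p 8 * p 9 ^ 3 ∧
        p 13 = p 10 * p 11 * p 8 ^ 2 * p 9 ^ 3 ∧
        p 13 = p 8 ^ 12 ∧
        p 13 = p 9 ^ 10 ∧
        p 13 = p 0 ^ 60 ∧
        p 13 = p 1 ^ 40 ∧
        p 13 = p 2 ^ 30 ∧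
        p 13 = p 3 ^ 20 ∧
        p 13 = p 4 ^ 20 ∧
        p 13 = p 5 ^ 8 ∧
        p 13 = p 6 ^ 6 ∧
        p 13 = p 7 ^ 4} ∧
      Nat.card H = 512 ∧
      (∀ x ∈ H, x * x = 1) ∧
      Nonempty (H ≃* Multiplicative (Fin 9 → ZMod 2)) := by
  refine ⟨signTuple.range, coe_range_signTuple, ?_, ?_,
    ⟨(MonoidHom.ofInjective signTuple_injective).symm⟩⟩
  · rw [← Nat.card_congr (MonoidHom.ofInjective signTuple_injective).toEquiv]
    simp [Nat.card_eq_fintype_card]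
  · rintro _ ⟨f, rfl⟩
    rw [← map_mul, show f * f = 1 from congrArg Multiplicative.ofAdd (ZModModule.add_self f.toAdd),
      map_one]
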